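/- Let g = 208716480x^5 - 74370240x^6 - 38384640y^2x + 331067520y^4x + 19192320x^2 - 660935520y^2x^4 + 19192320y^4 - 175129920x^4 - 701719200y^4x^2 - 9596160yx^2 + 28788480y^5 + 760495680y^3x^2 - 226709280y^2x^2 - 106757280y^6 - 319072320yx^3 - 374250240y^5x + 926029440y^2x^3 - 338264640yx^5 + 666933120yx^4 - 19192320y^3x - 858856320x^3y^3 + 21591360x^3 ∈ ℂ[x,y]. Then the set of points (a,b) ∈ ℂ^2 at which g, ∂g/∂x and ∂g/∂y all vanish is exactly {(0,0), (1,0), (-1,1)}. -/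
import Mathlib

open MvPolynomial

noncomputable section

def x : MvPolynomial (Fin 2) ℂ := X 0
def y : MvPolynomial (Fin 2) ℂ := X 1

/-- The sextic of non-torus type with configuration `[A_14 + A_2 + A_1]`. -/
def g : MvPolynomial (Fin 2) ℂ :=
  208716480 * x ^ 5 - 74370240 * x ^ 6 - 38384640 * y ^ 2 * x + 331067520 * y ^ 4 * x
    + 19192320 * x ^ 2 - 660935520 * y ^ 2 * x ^ 4 + 19192320 * y ^ 4 - 175129920 * x ^ 4
    - 701719200 * y ^ 4 * x ^ 2 - 9596160 * y * x ^ 2 + 28788480 * y ^ 5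
    + 760495680 * y ^ 3 * x ^ 2 - 226709280 * y ^ 2 * x ^ 2 - 106757280 * y ^ 6
    - 319072320 * y * x ^ 3 - 374250240 * y ^ 5 * x + 926029440 * y ^ 2 * x ^ 3
    - 338264640 * y * x ^ 5 + 666933120 * y * x ^ 4 - 19192320 * y ^ 3 * x
    - 858856320 * x ^ 3 * y ^ 3 + 21591360 * x ^ 3

lemma gC : g = C (19192320 : ℂ) * y ^ 4 + C (28788480 : ℂ) * y ^ 5 + C (-106757280 : ℂ) * y ^ 6 + C (-38384640 : ℂ) * x * y ^ 2 + C (-19192320 : ℂ) * x * y ^ 3 + C (331067520 : ℂ) * x * y ^ 4 + C (-374250240 : ℂ) * x * y ^ 5 + C (19192320 : ℂ) * x ^ 2 + C (-9596160 : ℂ) * x ^ 2 * y + C (-226709280 : ℂ) * x ^ 2 * y ^ 2 + C (760495680 : ℂ) * x ^ 2 * y ^ 3 + C (-701719200 : ℂ) * x ^ 2 * y ^ 4 + C (21591360 : ℂ) * x ^ 3 + C (-319072320 : ℂ) * x ^ 3 * y + C (926029440 : ℂ) * x ^ 3 * y ^ 2 + C (-858856320 : ℂ) * x ^ 3 * y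 ^ 3 + C (-175129920 : ℂ) * x ^ 4 + C (666933120 : ℂ) * x ^ 4 * y + C (-660935520 : ℂ) * x ^ 4 * y ^ 2 + C (208716480 : ℂ) * x ^ 5 + C (-338264640 : ℂ) * x ^ 5 * y + C (-74370240 : ℂ) * x ^ 6 := by
  rw [g]; simp only [map_neg, map_ofNat]; ring

lemma evg (a b : ℂ) : eval ![a, b] g = (-106757280) * b ^ 6 + (-374250240) * a * b ^ 5 + (-701719200) * a ^ 2 * b ^ 4 + (-858856320) * a ^ 3 * b ^ 3 + (-660935520) * a ^ 4 * b ^ 2 + (-338264640) * a ^ 5 * b + (-74370240) * a ^ 6 + 28788480 * b ^ 5 + 331067520 * a * b ^ 4 + 760495680 * a ^ 2 * b ^ 3 + 926029440 * a ^ 3 * b ^ 2 + 666933120 * a ^ 4 * b + 208716480 * a ^ 5 + 19192320 * b ^ 4 + (-19192320) * a * b ^ 3 + (-226709280) * a ^ 2 * b ^ 2 + (-319072320) * a ^ 3 * b + (-175129920) * a ^ 4 + (-38384640) * a * b ^ 2 + (-9596160) * a ^ 2 * b + 21591360 * a ^ 3 + 19192320 * a ^ 2 := by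
  rw [gC]; simp [x, y]; ring

lemma evgx (a b : ℂ) : eval ![a, b] (pderiv (0 : Fin 2) g) = (-374250240) * b ^ 5 + (-1403438400) * a * b ^ 4 + (-2576568960) * a ^ 2 * b ^ 3 + (-2643742080) * a ^ 3 * b ^ 2 + (-1691323200) * a ^ 4 * b + (-446221440) * a ^ 5 + 331067520 * b ^ 4 + 1520991360 * a * b ^ 3 + 2778088320 * a ^ 2 * b ^ 2 + 2667732480 * a ^ 3 * b + 1043582400 * a ^ 4 + (-19192320) * b ^ 3 + (-453418560) * a * b ^ 2 + (-957216960) * a ^ 2 * b + (-700519680) * a ^ 3 + (-38384640) * b ^ 2 + (-19192320) * a * b + 64774080 * a ^ 2 + 38384640 * a := by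
  rw [gC]
  simp [x, y, pderiv_mul, pderiv_pow, pderiv_X, pderiv_C]
  ring

lemma evgy (a b : ℂ) : eval ![a, b] (pderiv (1 : Fin 2) g) = (-640543680) * b ^ 5 + (-1871251200) * a * b ^ 4 + (-2806876800) * a ^ 2 * b ^ 3 + (-2576568960) * a ^ 3 * b ^ 2 + (-1321871040) * a ^ 4 * b + (-338264640) * a ^ 5 + 143942400 * b ^ 4 + 1324270080 * a * b ^ 3 + 2281487040 * a ^ 2 * b ^ 2 + 1852058880 * a ^ 3 * b + 666933120 * a ^ 4 + 76769280 * b ^ 3 + (-57576960) * a * b ^ 2 + (-453418560) * a ^ 2 * b + (-319072320) * a ^ 3 + (-76769280) * a * b + (-9596160) * a ^ 2 := by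
  rw [gC]
  simp [x, y, pderiv_mul, pderiv_pow, pderiv_X, pderiv_C]
  ring

/-- The singular points of the affine sextic `g = 0` are exactly
`(0,0)` (an `A_14`), `(1,0)` (an `A_2`) and `(-1,1)` (an `A_1`). -/
theorem singular_points_of_g :
    {p : ℂ × ℂ |
        eval ![p.1, p.2] g = 0 ∧
        eval ![p.1, p.2] (pderiv (0 : Fin 2) g) = 0 ∧
        eval ![p.1, p.2] (pderiv (1 : Fin 2) g) = 0}
      = ({((0 : ℂ), (0 : ℂ)), (1, 0), (-1, 1)} : Set (ℂ × ℂ)) := by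
  ext ⟨a, b⟩
  simp only [Set.mem_setOf_eq, Set.mem_insert_iff, Set.mem_singleton_iff, Prod.mk.injEq,
    evg, evgx, evgy]
  constructor
  · rintro ⟨e1, e2, e3⟩
    have h9 : a ^ 7 * (a - 1) * (a + 1) = 0 := by
      linear_combination ((61632308059263808327/3702957955685295709248000) * b ^ 3 + (30924319625844594157/1339016046475486394862000) * a * b ^ 2 + (1387194540513144511349/99979864803502984149696000) * a ^ 2 * b + (196412968067/145321033650670080) * a ^ 3 + (-30313885531777440973/24994966200875746037424000) * b ^ 2 + (-2199407214730760398541/299939594410508952449088000) * a * b + (-1111315546172059511/357070945726796371963200) * a ^ 2 + (-8989806506926398467/2999395944105089524490880) * b + (204992687639149727/799838918428023873197568) * a + (-1365012130580086621/1874622465065680952806800)) * e1 + ((-332818471087/2034494471109381120) * b ^ 4 + (-70850312099649117727/22217747734111774255488000) * a * b ^ 3 + (-155683916431031084357/36727297274756198259072000) * a ^ 2 * b ^ 2 + (-742832405074706575537/299939594410508952449088000) * a ^ 3 * b + (-7077423721/29064206730134016) * a ^ 4 + (-508533751098745879/3780751190048432173728000) * b ^ 3 + (166923646238996794033/359927513292610742938905600)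 * a * b ^ 2 + (47343754360894063123/29026412362307317978944000) * a ^ 2 * b + (2626472452410182557/4284851348721556463558400) * a ^ 3 + (-783987267352344473/2556303361453201299282000) * b ^ 2 + (101921203004254706029/449909391615763428673632000) * a * b + (-10477542690839522027/19995972960700596829939200) * a ^ 2 + (-1/110205900) * b + (680379792484928429/1874622465065680952806800) * a) * e2 + ((-59508749333799732427/22217747734111774255488000) * b ^ 4 + (-906894693589877821049/257091080923293387813504000) * a * b ^ 3 + (-1125389235084383575199/599879188821017904898176000) * a ^ 2 * b ^ 2 + (48702847/2306683073820160) * a ^ 4 + (61605783969241972963/179963756646305371469452800) * b ^ 3 + (801982423902903254453/359927513292610742938905600) * a * b ^ 2 + (386452955640083420839/299939594410508952449088000) * a ^ 2 * b + (73264248139133596253/89981878323152685734726400) * b ^ 2 + (237929923886447671451/899818783231526857347264000) * a * b + (142933541452754677/363563144740010851453440) * a ^ 2 + (982283025659407951/28119336975985214292102000) * b + (-564409550161432813/908907861850027128633600) * a + (-1/220411800)) * e3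
    rcases mul_eq_zero.mp h9 with h | h
    · rcases mul_eq_zero.mp h with h | h
      · have ha : a = 0 := pow_eq_zero_iff (by norm_num : (7:ℕ) ≠ 0) |>.mp h
        subst ha
        have hb2 : b ^ 2 = 0 := by
          linear_combination ((159/136478720)) * e1 + ((89/334372864) * b + (-1/38384640)) * e2 + ((-4677/13374914560) * b + (3809/30093557760)) * e3
        have hb : b = 0 := pow_eq_zero_iff (by norm_num : (2:ℕ) ≠ 0) |>.mp hb2
        exact Or.inl ⟨rfl, hb⟩
      · have ha : a = 1 := by linear_combination h
        subst ha
        have hb2 : b ^ 2 = 0 := by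
          linear_combination ((27856711/72464033187840)) * e1 + ((523409/5115108225024) * b + (7261/74564259840)) * e2 + ((-53850731/434784199127040) * b + (-2943187/28985613275136)) * e3
        have hb : b = 0 := pow_eq_zero_iff (by norm_num : (2:ℕ) ≠ 0) |>.mp hb2
        exact Or.inr (Or.inl ⟨rfl, hb⟩)
    · have ha : a = -1 := by linear_combination h
      subst ha
      have hb : b = 1 := by
        linear_combination ((40937/150702894720) * b + (-513259/120562315776)) * e1 + ((-280261/3616869473280) * b ^ 2 + (6049/33489532160) * b + (-235673/226054342080)) * e2 + ((113549/200937192960) * b + (16007/60281157888)) * e3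
      exact Or.inr (Or.inr ⟨rfl, hb⟩)
  · rintro (⟨rfl, rfl⟩ | ⟨rfl, rfl⟩ | ⟨rfl, rfl⟩) <;> norm_num

end
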